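/- Let ξ ∈ S¹ satisfy: ξ·γ_i ≠ 0 for all i = 1, …, m, γ†(ξ) ≠ 0, and Σ_{i=1}^m c_i/(ξ·γ_i) ≠ 0. Then the vectors γ(ξ), γ†(ξ), γ^⊥(ξ) are linearly independent in ℝ³; equivalently, the 3×3 matrix Q(ξ) whose rows are γ(ξ), γ†(ξ), γ^⊥(ξ) has nonzero determinant. -/

import Mathlib

noncomputable section

open MeasureTheory

/-- Dot product in `ℝ²`. -/
def dot2 (a b : ℝ × ℝ) : ℝ := a.1 * b.1 + a.2 * b.2

/-- The rotation `w ↦ w^⊥ = (−w2, w1)`. -/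
def perp2 (w : ℝ × ℝ) : ℝ × ℝ := (-w.2, w.1)

/-- The symmetric tensor `w² = (w1², w1 w2, w2²)`, identified with a vector in `ℝ³`. -/
def tsq (w : ℝ × ℝ) : Fin 3 → ℝ := ![w.1 ^ 2, w.1 * w.2, w.2 ^ 2]

/-- The symmetric tensor `w ⊙ w^⊥ = (−w1 w2, (w1² − w2²)/2, w1 w2)`. -/
def todot (w : ℝ × ℝ) : Fin 3 → ℝ := ![-(w.1 * w.2), (w.1 ^ 2 - w.2 ^ 2) / 2, w.1 * w.2]

/-- The vector `γ(ξ) = −Σᵢ cᵢ γᵢ² / (ξ·γᵢ)`. -/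
def gammaVec (m : ℕ) (γ : Fin m → ℝ × ℝ) (c : Fin m → ℝ) (ξ : ℝ × ℝ) : Fin 3 → ℝ :=
  -∑ i : Fin m, (c i / dot2 ξ (γ i)) • tsq (γ i)

/-- The vector `γ†(ξ) = −Σᵢ cᵢ (γᵢ ⊙ γᵢ^⊥) / (ξ·γᵢ)`. -/
def gammaDag (m : ℕ) (γ : Fin m → ℝ × ℝ) (c : Fin m → ℝ) (ξ : ℝ × ℝ) : Fin 3 → ℝ :=
  -∑ i : Fin m, (c i / dot2 ξ (γ i)) • todot (γ i)

/-- The vector `γ^⊥(ξ) = −Σᵢ cᵢ (γᵢ^⊥)² / (ξ·γᵢ)`. -/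
def gammaPerp (m : ℕ) (γ : Fin m → ℝ × ℝ) (c : Fin m → ℝ) (ξ : ℝ × ℝ) : Fin 3 → ℝ :=
  -∑ i : Fin m, (c i / dot2 ξ (γ i)) • tsq (perp2 (γ i))

/-!
In coordinates `S = (P, Q, R)` for the symmetric tensor `S = Σᵢ (cᵢ / ξ·γᵢ) γᵢ²`, the three rows
are `-S`, `-(S Jᵀ + J S)/2` and `-J S Jᵀ`, where `J` is the rotation by `π/2`. A direct
expansion gives `det Q(ξ) = -(P + R)((P - R)² + 4Q²)/2`. Since the `γᵢ` are unit vectors,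
`P + R = Σᵢ cᵢ / (ξ·γᵢ)`, and `(P - R)² + 4Q² = 0` exactly when `γ†(ξ) = 0`.
-/

/-- `S ↦ (S Jᵀ + J S)/2` on symmetric tensors. -/
def rotSym : (Fin 3 → ℝ) →ₗ[ℝ] (Fin 3 → ℝ) where
  toFun S := ![-S 1, (S 0 - S 2) / 2, S 1]
  map_add' S T := by
    funext k; fin_cases k <;> simp <;> ring
  map_smul' a S := by
    funext k; fin_cases k <;> simp [← mul_sub, mul_div_assoc]

/-- `S ↦ J S Jᵀ` on symmetric tensors. -/
def rotConj : (Fin 3 → ℝ) →ₗ[ℝ] (Fin 3 → ℝ) where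
  toFun S := ![S 2, -S 1, S 0]
  map_add' S T := by
    funext k; fin_cases k <;> simp [add_comm]
  map_smul' a S := by
    funext k; fin_cases k <;> simp

lemma rotSym_tsq (w : ℝ × ℝ) : rotSym (tsq w) = todot w := by
  funext k; fin_cases k <;> simp [rotSym, tsq, todot]

lemma rotConj_tsq (w : ℝ × ℝ) : rotConj (tsq w) = tsq (perp2 w) := by
  funext k; fin_cases k <;> simp [rotConj, tsq, perp2, mul_comm]

lemma det_of_rotSym_rotConj (S : Fin 3 → ℝ) :
    (Matrix.of ![S, rotSym S, rotConj S]).det =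
      (S 0 + S 2) * ((S 0 - S 2) ^ 2 + 4 * S 1 ^ 2) / 2 := by
  simp only [rotSym, rotConj, LinearMap.coe_mk, AddHom.coe_mk, Matrix.det_fin_three,
    Matrix.of_apply, Matrix.cons_val', Matrix.cons_val_zero, Matrix.cons_val_fin_one,
    Matrix.cons_val_one, Matrix.cons_val]
  ring

lemma sq_add_four_mul_sq_pos_of_rotSym_ne_zero {S : Fin 3 → ℝ} (hS : rotSym S ≠ 0) :
    0 < (S 0 - S 2) ^ 2 + 4 * S 1 ^ 2 := by
  by_contra! h
  have h1 : S 1 = 0 := by nlinarith [sq_nonneg (S 0 - S 2), sq_nonneg (S 1)]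
  have h02 : S 0 - S 2 = 0 := by nlinarith [sq_nonneg (S 0 - S 2), sq_nonneg (S 1)]
  apply hS
  funext k; fin_cases k <;> simp [rotSym, h1, h02]

lemma sum_smul_tsq_zero_add_two {ι : Type*} [Fintype ι] (a : ι → ℝ) (γ : ι → ℝ × ℝ)
    (hunit : ∀ i, (γ i).1 ^ 2 + (γ i).2 ^ 2 = 1) :
    (∑ i, a i • tsq (γ i)) 0 + (∑ i, a i • tsq (γ i)) 2 = ∑ i, a i := by
  simp only [Finset.sum_apply, ← Finset.sum_add_distrib]
  refine Finset.sum_congr rfl fun i _ => ?_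
  simp [tsq, ← mul_add, hunit i]

theorem Q_invertible_general
    (m : ℕ) (γ : Fin m → ℝ × ℝ) (c : Fin m → ℝ)
    (hunit : ∀ i, (γ i).1 ^ 2 + (γ i).2 ^ 2 = 1)
    (ξ : ℝ × ℝ)
    (hdag : gammaDag m γ c ξ ≠ 0)
    (hsum : ∑ i : Fin m, c i / dot2 ξ (γ i) ≠ 0) :
    LinearIndependent ℝ ![gammaVec m γ c ξ, gammaDag m γ c ξ, gammaPerp m γ c ξ] ∧
      (Matrix.of ![gammaVec m γ c ξ, gammaDag m γ c ξ, gammaPerp m γ c ξ]).det ≠ 0 := by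
  set S := ∑ i, (c i / dot2 ξ (γ i)) • tsq (γ i)
  have hdagS : gammaDag m γ c ξ = -rotSym S := by
    simp [gammaDag, S, map_sum, rotSym_tsq]
  have hperpS : gammaPerp m γ c ξ = -rotConj S := by
    simp [gammaPerp, S, map_sum, rotConj_tsq]
  have hrows : Matrix.of ![gammaVec m γ c ξ, gammaDag m γ c ξ, gammaPerp m γ c ξ] =
      -Matrix.of ![S, rotSym S, rotConj S] := by
    rw [hdagS, hperpS]
    ext i j; fin_cases i <;> rfl
  have hdet : (Matrix.of ![gammaVec m γ c ξ, gammaDag m γ c ξ, gammaPerp m γ c ξ]).det ≠ 0 := by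
    rw [hrows, Matrix.det_neg, det_of_rotSym_rotConj, sum_smul_tsq_zero_add_two _ _ hunit]
    have hpos := sq_add_four_mul_sq_pos_of_rotSym_ne_zero (S := S) (by simpa [hdagS] using hdag)
    simp only [Fintype.card_fin]
    exact mul_ne_zero (by norm_num) (div_ne_zero (mul_ne_zero hsum hpos.ne') two_ne_zero)
  exact ⟨Matrix.linearIndependent_rows_of_det_ne_zero hdet, hdet⟩

/-- away from the singular directions, the vectors `γ(ξ)`, `γ†(ξ)`,
`γ^⊥(ξ)` are linearly independent, i.e. the matrix `Q(ξ)` is invertible. -/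
theorem Q_invertible
    (m : ℕ) (hm : 1 ≤ m) (γ : Fin m → ℝ × ℝ) (c : Fin m → ℝ)
    (hunit : ∀ i, (γ i).1 ^ 2 + (γ i).2 ^ 2 = 1)
    (hdist : Function.Injective γ)
    (hc : ∀ i, c i ≠ 0)
    (ξ : ℝ × ℝ) (hξ : ξ.1 ^ 2 + ξ.2 ^ 2 = 1)
    (hξγ : ∀ i, dot2 ξ (γ i) ≠ 0)
    (hdag : gammaDag m γ c ξ ≠ 0)
    (hsum : ∑ i : Fin m, c i / dot2 ξ (γ i) ≠ 0) :
    LinearIndependent ℝ ![gammaVec m γ c ξ, gammaDag m γ c ξ, gammaPerp m γ c ξ] ∧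
      (Matrix.of ![gammaVec m γ c ξ, gammaDag m γ c ξ, gammaPerp m γ c ξ]).det ≠ 0 :=
  Q_invertible_general m γ c hunit ξ hdag hsum
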